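/- FedSoftMax weighting skew lower bound: with κᵢ = exp(vᵢ/T)/∑_j p_j exp(v_j/T), one has π := minᵢ κᵢ ≥ exp(-(max_j v_j - min_j v_j)/T) > 0, hence the error bound E ≤ λ₂ (1/(π min pᵢ) - N) from the main theorem is finite for FedSoftMax. -/
import Mathlib


/-- FedSoftMax weighting-skew lower bound: with `κᵢ = exp(vᵢ/T)/∑ pⱼ exp(vⱼ/T)`, the minimum
`π = min κᵢ` satisfies `π ≥ exp(-(max v - min v)/T) > 0`; hence the error bound
`E ≤ λ₂(1/(π min pᵢ) - N)` is finite for FedSoftMax. -/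
theorem stmt_17 (N : ℕ) [NeZero N] (p v : Fin N → ℝ) (T : ℝ) (hT : 0 < T)
    (hp : ∀ i, 0 < p i) (hpsum : ∑ i, p i = 1) (hv : ∀ i, 0 ≤ v i)
    (κ : Fin N → ℝ)
    (hκ : ∀ i, κ i = Real.exp (v i / T) / ∑ j, p j * Real.exp (v j / T)) :
    Real.exp (-(Finset.univ.sup' Finset.univ_nonempty v -
        Finset.univ.inf' Finset.univ_nonempty v) / T)
      ≤ Finset.univ.inf' Finset.univ_nonempty κ ∧
    0 < Finset.univ.inf' Finset.univ_nonempty κ := by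
  set M := Finset.univ.sup' Finset.univ_nonempty v with hM
  set m := Finset.univ.inf' Finset.univ_nonempty v with hm
  have hS : ∑ j, p j * Real.exp (v j / T) ≤ Real.exp (M / T) := by
    calc ∑ j, p j * Real.exp (v j / T)
        ≤ ∑ j, p j * Real.exp (M / T) := by
          apply Finset.sum_le_sum
          intro j _
          exact mul_le_mul_of_nonneg_left
            (Real.exp_le_exp.mpr (div_le_div_of_nonneg_right
              (Finset.le_sup' v (Finset.mem_univ j)) hT.le)) (hp j).le
      _ = Real.exp (M / T) := by rw [← Finset.sum_mul, hpsum, one_mul]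
  have hSpos : 0 < ∑ j, p j * Real.exp (v j / T) :=
    Finset.sum_pos (fun j _ => mul_pos (hp j) (Real.exp_pos _)) Finset.univ_nonempty
  have key : ∀ i, Real.exp (-(M - m) / T) ≤ κ i := by
    intro i
    rw [hκ i]
    have h1 : Real.exp (m / T) ≤ Real.exp (v i / T) :=
      Real.exp_le_exp.mpr (div_le_div_of_nonneg_right
        (Finset.inf'_le v (Finset.mem_univ i)) hT.le)
    have : Real.exp (-(M - m) / T) = Real.exp (m / T) / Real.exp (M / T) := by
      rw [← Real.exp_sub]; ring_nf
    rw [this]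
    exact div_le_div₀ (Real.exp_pos _).le h1 hSpos hS
  refine ⟨Finset.le_inf' _ _ fun i _ => key i, ?_⟩
  exact lt_of_lt_of_le (Real.exp_pos _) (Finset.le_inf' _ _ fun i _ => key i)
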